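/- arXiv:0906.2058 — 5 statements merged into one kernel-verified Lean document; each statement's English description precedes it below -/
import Mathlib

section
/- If (p̄,q̄) is a Nash equilibrium, then for every (p,q) in Σ_p × Σ_q and every λ ≥ 0 with (p+λ(p−p̄), q+λ(q−q̄)) ∈ Σ_p × Σ_q, one has H(p+λ(p−p̄), q+λ(q−q̄)) ≥ (1+λ) H(p,q). In particular H is nondecreasing along half-rays emanating from the Nash equilibrium. -/
open Matrix

/-- The "duality gap" Hamiltonian of the zero-sum game with payoff matrix `M`:
`H(p,q) = max_{p'∈Σ_p} p'ᵀ M q − min_{q'∈Σ_q} pᵀ M q'`. -/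
noncomputable def H {m n : ℕ} (M : Matrix (Fin m) (Fin n) ℝ)
    (p : Fin m → ℝ) (q : Fin n → ℝ) : ℝ :=
  sSup ((fun p' => p' ⬝ᵥ M *ᵥ q) '' stdSimplex ℝ (Fin m)) -
    sInf ((fun q' => p ⬝ᵥ M *ᵥ q') '' stdSimplex ℝ (Fin n))

theorem H_increasing_on_rays {m n : ℕ} (M : Matrix (Fin m) (Fin n) ℝ)
    (pbar : Fin m → ℝ) (qbar : Fin n → ℝ)
    (hpbar : pbar ∈ stdSimplex ℝ (Fin m)) (hqbar : qbar ∈ stdSimplex ℝ (Fin n))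
    (hmax : ∀ p' ∈ stdSimplex ℝ (Fin m), p' ⬝ᵥ M *ᵥ qbar ≤ pbar ⬝ᵥ M *ᵥ qbar)
    (hmin : ∀ q' ∈ stdSimplex ℝ (Fin n), pbar ⬝ᵥ M *ᵥ qbar ≤ pbar ⬝ᵥ M *ᵥ q') :
    ∀ p ∈ stdSimplex ℝ (Fin m), ∀ q ∈ stdSimplex ℝ (Fin n), ∀ l : ℝ, 0 ≤ l →
      p + l • (p - pbar) ∈ stdSimplex ℝ (Fin m) →
      q + l • (q - qbar) ∈ stdSimplex ℝ (Fin n) →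
      (1 + l) * H M p q ≤ H M (p + l • (p - pbar)) (q + l • (q - qbar)) := by
  intro p hp q hq l hl hx hy
  have h1l : (0:ℝ) < 1 + l := by linarith
  set c : ℝ := pbar ⬝ᵥ M *ᵥ qbar with hc
  -- continuity helpers
  have hcontm : ∀ v : Fin n → ℝ, Continuous fun p' : Fin m → ℝ => p' ⬝ᵥ M *ᵥ v := by
    intro v
    unfold dotProduct
    exact continuous_finset_sum _ fun i _ => (continuous_apply i).mul continuous_const
  have hcontn : ∀ u : Fin m → ℝ, Continuous fun q' : Fin n → ℝ => u ⬝ᵥ M *ᵥ q' := by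
    intro u
    have : (fun q' : Fin n → ℝ => u ⬝ᵥ M *ᵥ q') = fun q' => (u ᵥ* M) ⬝ᵥ q' := by
      funext q'; rw [dotProduct_mulVec]
    rw [this]
    unfold dotProduct
    exact continuous_finset_sum _ fun i _ => continuous_const.mul (continuous_apply i)
  have hbddS : ∀ v : Fin n → ℝ,
      BddAbove ((fun p' : Fin m → ℝ => p' ⬝ᵥ M *ᵥ v) '' stdSimplex ℝ (Fin m)) :=
    fun v => (isCompact_stdSimplex ℝ (Fin m) |>.image (hcontm v)).bddAbove
  have hbddT : ∀ u : Fin m → ℝ,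
      BddBelow ((fun q' : Fin n → ℝ => u ⬝ᵥ M *ᵥ q') '' stdSimplex ℝ (Fin n)) :=
    fun u => (isCompact_stdSimplex ℝ (Fin n) |>.image (hcontn u)).bddBelow
  have hSne : ∀ v : Fin n → ℝ,
      ((fun p' : Fin m → ℝ => p' ⬝ᵥ M *ᵥ v) '' stdSimplex ℝ (Fin m)).Nonempty :=
    fun v => ⟨_, ⟨pbar, hpbar, rfl⟩⟩
  have hTne : ∀ u : Fin m → ℝ,
      ((fun q' : Fin n → ℝ => u ⬝ᵥ M *ᵥ q') '' stdSimplex ℝ (Fin n)).Nonempty :=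
    fun u => ⟨_, ⟨qbar, hqbar, rfl⟩⟩
  -- key inequality 1
  have key1 : (1 + l) * sSup ((fun p' : Fin m → ℝ => p' ⬝ᵥ M *ᵥ q) '' stdSimplex ℝ (Fin m)) ≤
      sSup ((fun p' : Fin m → ℝ => p' ⬝ᵥ M *ᵥ (q + l • (q - qbar))) '' stdSimplex ℝ (Fin m))
        + l * c := by
    rw [mul_comm ((1:ℝ)+l), ← le_div_iff₀ h1l]
    apply csSup_le (hSne q)
    rintro a ⟨p', hp', rfl⟩
    rw [le_div_iff₀ h1l]
    have hle : p' ⬝ᵥ M *ᵥ (q + l • (q - qbar)) ≤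
        sSup ((fun p' : Fin m → ℝ => p' ⬝ᵥ M *ᵥ (q + l • (q - qbar))) '' stdSimplex ℝ (Fin m)) :=
      le_csSup (hbddS _) ⟨p', hp', rfl⟩
    have hle2 : l * (p' ⬝ᵥ M *ᵥ qbar) ≤ l * c :=
      mul_le_mul_of_nonneg_left (hmax p' hp') hl
    have hid : (1 + l) * (p' ⬝ᵥ M *ᵥ q) =
        p' ⬝ᵥ M *ᵥ (q + l • (q - qbar)) + l * (p' ⬝ᵥ M *ᵥ qbar) := by
      simp [mulVec_add, mulVec_smul, mulVec_sub, dotProduct_add, dotProduct_smul,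
        dotProduct_sub, smul_eq_mul]
      ring
    linarith
  -- key inequality 2
  have key2 : sInf ((fun q' : Fin n → ℝ =>
        (p + l • (p - pbar)) ⬝ᵥ M *ᵥ q') '' stdSimplex ℝ (Fin n)) + l * c ≤
      (1 + l) * sInf ((fun q' : Fin n → ℝ => p ⬝ᵥ M *ᵥ q') '' stdSimplex ℝ (Fin n)) := by
    rw [mul_comm ((1:ℝ)+l), ← div_le_iff₀ h1l]
    apply le_csInf (hTne p)
    rintro a ⟨q', hq', rfl⟩
    rw [div_le_iff₀ h1l]
    have hle : sInf ((fun q' : Fin n → ℝ =>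
        (p + l • (p - pbar)) ⬝ᵥ M *ᵥ q') '' stdSimplex ℝ (Fin n)) ≤
        (p + l • (p - pbar)) ⬝ᵥ M *ᵥ q' :=
      csInf_le (hbddT _) ⟨q', hq', rfl⟩
    have hle2 : l * c ≤ l * (pbar ⬝ᵥ M *ᵥ q') :=
      mul_le_mul_of_nonneg_left (hmin q' hq') hl
    have hid : (1 + l) * (p ⬝ᵥ M *ᵥ q') =
        (p + l • (p - pbar)) ⬝ᵥ M *ᵥ q' + l * (pbar ⬝ᵥ M *ᵥ q') := by
      simp [add_dotProduct, smul_dotProduct, sub_dotProduct, smul_eq_mul]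
      ring
    linarith
  rw [H, H, mul_sub]
  linarith
end

section
/- Suppose M is an n×n matrix all of whose r×r minors are nonzero for every r ≥ 2, and suppose (p̄,q̄) is a completely mixed Nash equilibrium. Then (p̄,q̄) is the unique Nash equilibrium of the game. -/
open Matrix

private lemma helper_eq_of_le {n : ℕ} {x f : Fin n → ℝ} {v : ℝ}
    (hx : ∑ j, x j = 1) (hpos : ∀ j, 0 < x j)
    (hle : ∀ j, v ≤ f j) (hsum : ∑ j, x j * f j ≤ v) : ∀ j, f j = v := by
  have hzero : ∑ j, x j * (f j - v) = 0 := by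
    have h1 : ∑ j, x j * (f j - v) = (∑ j, x j * f j) - v := by
      simp [mul_sub, Finset.sum_sub_distrib, ← Finset.sum_mul, hx]
    have h2 : (0:ℝ) ≤ ∑ j, x j * (f j - v) :=
      Finset.sum_nonneg fun j _ => mul_nonneg (hpos j).le (by linarith [hle j])
    linarith
  intro j
  have := (Finset.sum_eq_zero_iff_of_nonneg
    (fun j _ => mul_nonneg (hpos j).le (by linarith [hle j]))).mp hzero j (Finset.mem_univ j)
  have hx' := (hpos j).ne'
  rcases mul_eq_zero.mp this with h | h
  · exact absurd h hx'
  · linarith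

private lemma helper_eq_of_ge {n : ℕ} {x f : Fin n → ℝ} {v : ℝ}
    (hx : ∑ j, x j = 1) (hpos : ∀ j, 0 < x j)
    (hle : ∀ j, f j ≤ v) (hsum : v ≤ ∑ j, x j * f j) : ∀ j, f j = v := by
  have := helper_eq_of_le (f := fun j => -f j) (v := -v) hx hpos
    (fun j => by simpa using hle j)
    (by simpa [mul_neg, ← Finset.sum_neg_distrib] using neg_le_neg hsum)
  intro j
  have := this j
  simpa [neg_eq_iff_eq_neg] using this

theorem unique_nash_of_minors_nonzero {n : ℕ} (M : Matrix (Fin n) (Fin n) ℝ)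
    (hminor : ∀ r : ℕ, 2 ≤ r → ∀ (f g : Fin r → Fin n),
      Function.Injective f → Function.Injective g → (M.submatrix f g).det ≠ 0)
    (pbar qbar : Fin n → ℝ)
    (hpbar : pbar ∈ stdSimplex ℝ (Fin n)) (hqbar : qbar ∈ stdSimplex ℝ (Fin n))
    (hppos : ∀ i, 0 < pbar i) (hqpos : ∀ j, 0 < qbar j)
    (hmax : ∀ p' ∈ stdSimplex ℝ (Fin n), p' ⬝ᵥ M *ᵥ qbar ≤ pbar ⬝ᵥ M *ᵥ qbar)
    (hmin : ∀ q' ∈ stdSimplex ℝ (Fin n), pbar ⬝ᵥ M *ᵥ qbar ≤ pbar ⬝ᵥ M *ᵥ q') :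
    ∀ p ∈ stdSimplex ℝ (Fin n), ∀ q ∈ stdSimplex ℝ (Fin n),
      (∀ p' ∈ stdSimplex ℝ (Fin n), p' ⬝ᵥ M *ᵥ q ≤ p ⬝ᵥ M *ᵥ q) →
      (∀ q' ∈ stdSimplex ℝ (Fin n), p ⬝ᵥ M *ᵥ q ≤ p ⬝ᵥ M *ᵥ q') →
      p = pbar ∧ q = qbar := by
  intro p hp q hq hmaxq hminq
  -- trivial small cases
  rcases Nat.lt_or_ge n 2 with hn | hn
  · interval_cases n
    · exact ⟨funext fun i => i.elim0, funext fun i => i.elim0⟩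
    · have e1 : p 0 = 1 := by simpa [Fin.sum_univ_one] using hp.2
      have e2 : pbar 0 = 1 := by simpa [Fin.sum_univ_one] using hpbar.2
      have e3 : q 0 = 1 := by simpa [Fin.sum_univ_one] using hq.2
      have e4 : qbar 0 = 1 := by simpa [Fin.sum_univ_one] using hqbar.2
      constructor <;> funext i <;> have hi : i = 0 := Subsingleton.elim _ _ <;>
        rw [hi] <;> simp [e1, e2, e3, e4]
  · have hdet : M.det ≠ 0 := by
      have := hminor n hn id id Function.injective_id Function.injective_id
      simpa [Matrix.submatrix_id_id] using this
    have hsingle : ∀ j : Fin n, Pi.single j (1:ℝ) ∈ stdSimplex ℝ (Fin n) := by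
      intro j
      refine ⟨fun i => ?_, by simp [Finset.sum_pi_single']⟩
      by_cases h : i = j <;> simp [h, Pi.single_apply]
    set v := pbar ⬝ᵥ M *ᵥ qbar with hv
    -- row vector pbar ᵥ* M is constant v
    have hrow : ∀ j, (pbar ᵥ* M) j = v := by
      apply helper_eq_of_le hqbar.2 hqpos
      · intro j
        have := hmin _ (hsingle j)
        rwa [dotProduct_mulVec, dotProduct_single, mul_one] at this
      · have : ∑ j, qbar j * (pbar ᵥ* M) j = v := by
          rw [hv, dotProduct_mulVec, dotProduct]
          exact Finset.sum_congr rfl fun j _ => mul_comm _ _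
        linarith
    -- column vector M *ᵥ qbar is constant v
    have hcol : ∀ i, (M *ᵥ qbar) i = v := by
      apply helper_eq_of_ge hpbar.2 hppos
      · intro i
        have := hmax _ (hsingle i)
        rwa [single_dotProduct, one_mul] at this
      · rw [hv, dotProduct]
    -- value of (p, q) equals v
    have hval1 : p ⬝ᵥ M *ᵥ qbar = v := by
      rw [dotProduct]
      calc ∑ i, p i * (M *ᵥ qbar) i = ∑ i, p i * v := by
            exact Finset.sum_congr rfl fun i _ => by rw [hcol i]
        _ = (∑ i, p i) * v := by rw [Finset.sum_mul]
        _ = v := by rw [hp.2, one_mul]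
    have hval2 : pbar ⬝ᵥ M *ᵥ q = v := by
      rw [dotProduct_mulVec, dotProduct]
      calc ∑ j, (pbar ᵥ* M) j * q j = ∑ j, v * q j := by
            exact Finset.sum_congr rfl fun j _ => by rw [hrow j]
        _ = v * ∑ j, q j := by rw [Finset.mul_sum]
        _ = v := by rw [hq.2, mul_one]
    have hw : p ⬝ᵥ M *ᵥ q = v := by
      have h1 := hminq _ hqbar
      have h2 := hmaxq _ hpbar
      rw [hval1] at h1; rw [hval2] at h2
      linarith
    -- M *ᵥ q is constant v
    have hcolq : ∀ i, (M *ᵥ q) i = v := by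
      apply helper_eq_of_ge hpbar.2 hppos
      · intro i
        have := hmaxq _ (hsingle i)
        rwa [single_dotProduct, one_mul, hw] at this
      · rw [← hval2, dotProduct]
    -- p ᵥ* M is constant v
    have hrowp : ∀ j, (p ᵥ* M) j = v := by
      apply helper_eq_of_le hqbar.2 hqpos
      · intro j
        have := hminq _ (hsingle j)
        rwa [hw, dotProduct_mulVec, dotProduct_single, mul_one] at this
      · have : ∑ j, qbar j * (p ᵥ* M) j = v := by
          rw [← hval1, dotProduct_mulVec, dotProduct]
          exact Finset.sum_congr rfl fun j _ => mul_comm _ _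
        linarith
    have hMq : M *ᵥ q = M *ᵥ qbar := by
      funext i; rw [hcolq i, hcol i]
    have hpM : p ᵥ* M = pbar ᵥ* M := by
      funext j; rw [hrowp j, hrow j]
    have hunit : IsUnit M.det := isUnit_iff_ne_zero.mpr hdet
    constructor
    · have h1 : (p ᵥ* M) ᵥ* M⁻¹ = p := by
        rw [vecMul_vecMul, Matrix.mul_nonsing_inv M hunit, vecMul_one]
      have h2 : (pbar ᵥ* M) ᵥ* M⁻¹ = pbar := by
        rw [vecMul_vecMul, Matrix.mul_nonsing_inv M hunit, vecMul_one]
      rw [← h1, ← h2, hpM]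
    · have h1 : M⁻¹ *ᵥ (M *ᵥ q) = q := by
        rw [mulVec_mulVec, Matrix.nonsing_inv_mul M hunit, one_mulVec]
      have h2 : M⁻¹ *ᵥ (M *ᵥ qbar) = qbar := by
        rw [mulVec_mulVec, Matrix.nonsing_inv_mul M hunit, one_mulVec]
      rw [← h1, ← h2, hMq]
end

section
/- Let X, Y be matrices with M Y = Xᵀ M, let α ∈ ℝ, and let (p̄,q̄) be a completely mixed Nash equilibrium. If t ↦ (p(t),q(t)) is an absolutely continuous solution of the differential inclusion dp/dt ∈ X·BR_p(q) + α p̄ − p, dq/dt ∈ Y·BR_q(p) + α q̄ − q, then t ↦ H(p(t),q(t)) satisfies dH/dt = −H almost everywhere; hence H(p(t),q(t)) = H(p(0),q(0)) e^{−t}. -/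
open Matrix

section Aux
open MeasureTheory

lemma hasDerivAt_of_le_of_eq {f g : ℝ → ℝ} {t a : ℝ}
    (hle : ∀ s, g s ≤ f s) (heq : g t = f t)
    (hg : HasDerivAt g a t) (hf : DifferentiableAt ℝ f t) :
    HasDerivAt f a t := by
  have hd : HasDerivAt f (deriv f t) t := hf.hasDerivAt
  have hmin : IsLocalMin (fun s => f s - g s) t :=
    Filter.Eventually.of_forall fun s => by
      have h1 := hle s; simp only []; linarith [heq.le, heq.ge]
  have h0 : deriv f t - a = 0 := hmin.hasDerivAt_eq_zero (hd.sub hg)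
  have : deriv f t = a := by linarith
  rwa [this] at hd

lemma hasDerivAt_of_ge_of_eq {f g : ℝ → ℝ} {t a : ℝ}
    (hge : ∀ s, f s ≤ g s) (heq : g t = f t)
    (hg : HasDerivAt g a t) (hf : DifferentiableAt ℝ f t) :
    HasDerivAt f a t := by
  have := hasDerivAt_of_le_of_eq (f := fun s => -f s) (g := fun s => -g s)
    (fun s => neg_le_neg (hge s)) (by simp [heq]) hg.neg hf.neg
  simpa [Pi.neg_def] using this.neg

lemma hasDerivAt_dot_mulVec_right {m n : ℕ} (M : Matrix (Fin m) (Fin n) ℝ) (b : Fin m → ℝ)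
    {q : ℝ → Fin n → ℝ} {q' : Fin n → ℝ} {t : ℝ} (hq : HasDerivAt q q' t) :
    HasDerivAt (fun s => b ⬝ᵥ M *ᵥ q s) (b ⬝ᵥ M *ᵥ q') t := by
  have hj : ∀ j, HasDerivAt (fun s => q s j) (q' j) t := fun j =>
    (ContinuousLinearMap.proj (R := ℝ) (φ := fun _ : Fin n => ℝ) j).hasFDerivAt.comp_hasDerivAt t hq
  simp only [dotProduct, Matrix.mulVec]
  apply HasDerivAt.fun_sum
  intro i _
  exact HasDerivAt.const_mul _ (HasDerivAt.fun_sum fun j _ => (hj j).const_mul _)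

lemma hasDerivAt_dot_mulVec_left {m n : ℕ} (M : Matrix (Fin m) (Fin n) ℝ) (c : Fin n → ℝ)
    {p : ℝ → Fin m → ℝ} {p' : Fin m → ℝ} {t : ℝ} (hp : HasDerivAt p p' t) :
    HasDerivAt (fun s => p s ⬝ᵥ M *ᵥ c) (p' ⬝ᵥ M *ᵥ c) t := by
  have hi : ∀ i, HasDerivAt (fun s => p s i) (p' i) t := fun i =>
    (ContinuousLinearMap.proj (R := ℝ) (φ := fun _ : Fin m => ℝ) i).hasFDerivAt.comp_hasDerivAt t hp
  simp only [dotProduct]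
  exact HasDerivAt.fun_sum fun i _ => (hi i).mul_const _

lemma lipschitzWith_sup' {ι : Type*} [Fintype ι] [Nonempty ι] :
    LipschitzWith 1 (fun v : ι → ℝ => Finset.univ.sup' Finset.univ_nonempty (fun i => v i)) := by
  apply LipschitzWith.of_dist_le_mul
  intro v w
  rw [Real.dist_eq, NNReal.coe_one, one_mul, abs_sub_le_iff]
  constructor <;>
  · rw [sub_le_iff_le_add]
    apply Finset.sup'_le
    intro i _
    have h1 : dist (v i) (w i) ≤ dist v w := dist_le_pi_dist v w i
    have h2 : dist (w i) (v i) ≤ dist w v := dist_le_pi_dist w v i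
    rw [Real.dist_eq] at h1 h2
    rw [dist_comm] at h2
    obtain ⟨ha, hb⟩ := abs_sub_le_iff.1 h1
    have hv := Finset.le_sup' (f := fun i => v i) (Finset.mem_univ i)
    have hw := Finset.le_sup' (f := fun i => w i) (Finset.mem_univ i)
    beta_reduce at hv hw ⊢
    linarith

lemma lipschitzWith_inf' {ι : Type*} [Fintype ι] [Nonempty ι] :
    LipschitzWith 1 (fun v : ι → ℝ => Finset.univ.inf' Finset.univ_nonempty (fun i => v i)) := by
  apply LipschitzWith.of_dist_le_mul
  intro v w
  rw [Real.dist_eq, NNReal.coe_one, one_mul, abs_sub_le_iff]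
  constructor <;>
  · rw [sub_le_iff_le_add]
    first
    | (obtain ⟨i0, -, hi0⟩ := Finset.exists_mem_eq_inf' (Finset.univ_nonempty (α := ι)) (fun i => w i)
       have h1 : dist (v i0) (w i0) ≤ dist v w := dist_le_pi_dist v w i0
       rw [Real.dist_eq] at h1
       obtain ⟨ha, hb⟩ := abs_sub_le_iff.1 h1
       have hv := Finset.inf'_le (fun i => v i) (Finset.mem_univ i0)
       beta_reduce at hv ⊢
       rw [hi0]
       linarith)
    | (obtain ⟨i0, -, hi0⟩ := Finset.exists_mem_eq_inf' (Finset.univ_nonempty (α := ι)) (fun i => v i)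
       have h1 : dist (v i0) (w i0) ≤ dist v w := dist_le_pi_dist v w i0
       rw [Real.dist_eq] at h1
       obtain ⟨ha, hb⟩ := abs_sub_le_iff.1 h1
       have hv := Finset.inf'_le (fun i => w i) (Finset.mem_univ i0)
       beta_reduce at hv ⊢
       rw [hi0]
       linarith)

lemma isGreatest_simplex_dot {m n : ℕ} [Nonempty (Fin m)] (M : Matrix (Fin m) (Fin n) ℝ)
    (w : Fin n → ℝ) :
    IsGreatest ((fun p' => p' ⬝ᵥ M *ᵥ w) '' stdSimplex ℝ (Fin m))
      (Finset.univ.sup' Finset.univ_nonempty (fun i => (M *ᵥ w) i)) := by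
  constructor
  · obtain ⟨i0, -, hi0⟩ := Finset.exists_mem_eq_sup' Finset.univ_nonempty (fun i => (M *ᵥ w) i)
    exact ⟨Pi.single i0 1, single_mem_stdSimplex ℝ i0, by
      show Pi.single i0 1 ⬝ᵥ M *ᵥ w = _
      rw [hi0, single_dotProduct, one_mul]⟩
  · rintro x ⟨p', hp', rfl⟩
    calc p' ⬝ᵥ M *ᵥ w = ∑ i, p' i * (M *ᵥ w) i := rfl
      _ ≤ ∑ i, p' i * Finset.univ.sup' Finset.univ_nonempty (fun i => (M *ᵥ w) i) := by
          apply Finset.sum_le_sum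
          intro i _
          exact mul_le_mul_of_nonneg_left (Finset.le_sup' _ (Finset.mem_univ i)) (hp'.1 i)
      _ = _ := by rw [← Finset.sum_mul, hp'.2, one_mul]

lemma isLeast_simplex_dot {m n : ℕ} [Nonempty (Fin n)] (M : Matrix (Fin m) (Fin n) ℝ)
    (u : Fin m → ℝ) :
    IsLeast ((fun q' => u ⬝ᵥ M *ᵥ q') '' stdSimplex ℝ (Fin n))
      (Finset.univ.inf' Finset.univ_nonempty (fun j => (u ᵥ* M) j)) := by
  constructor
  · obtain ⟨j0, -, hj0⟩ := Finset.exists_mem_eq_inf' Finset.univ_nonempty (fun j => (u ᵥ* M) j)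
    refine ⟨Pi.single j0 1, single_mem_stdSimplex ℝ j0, ?_⟩
    show u ⬝ᵥ M *ᵥ Pi.single j0 1 = _
    rw [hj0, Matrix.dotProduct_mulVec, dotProduct_single, mul_one]
  · rintro x ⟨q', hq', rfl⟩
    show _ ≤ u ⬝ᵥ M *ᵥ q'
    rw [Matrix.dotProduct_mulVec]
    calc Finset.univ.inf' Finset.univ_nonempty (fun j => (u ᵥ* M) j)
        = ∑ j, q' j * Finset.univ.inf' Finset.univ_nonempty (fun j => (u ᵥ* M) j) := by
          rw [← Finset.sum_mul, hq'.2, one_mul]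
      _ ≤ ∑ j, q' j * (u ᵥ* M) j := by
          apply Finset.sum_le_sum
          intro j _
          exact mul_le_mul_of_nonneg_left (Finset.inf'_le _ (Finset.mem_univ j)) (hq'.1 j)
      _ = (u ᵥ* M) ⬝ᵥ q' := by simp [dotProduct, mul_comm]

lemma key_mono {f : ℝ → ℝ} (hf : Monotone f) (hc : Continuous f) {T L : ℝ}
    (hT : 0 ≤ T) (hL : 0 ≤ L)
    (h : ∀ᵐ x ∂(volume.restrict (Set.Ioo 0 T)), HasDerivAt f L x) :
    L * T ≤ f T - f 0 := by
  set S : StieltjesFunction ℝ := ⟨f, hf, fun x => hc.continuousAt.continuousWithinAt⟩ with hS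
  have hae := S.ae_hasDerivAt
  have h2 : ∀ᵐ x ∂(volume.restrict (Set.Ioo 0 T)),
      Measure.rnDeriv S.measure volume x = ENNReal.ofReal L := by
    filter_upwards [h, ae_restrict_of_ae hae,
      ae_restrict_of_ae (Measure.rnDeriv_lt_top S.measure volume)] with x hx h1x h2x
    have hu : (Measure.rnDeriv S.measure volume x).toReal = L := h1x.unique hx
    rw [← hu, ENNReal.ofReal_toReal h2x.ne]
  have hcalc : ENNReal.ofReal (L * T) ≤ ENNReal.ofReal (f T - f 0) := by
    calc ENNReal.ofReal (L * T)
        = ∫⁻ _ in Set.Ioo 0 T, ENNReal.ofReal L ∂volume := by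
          rw [MeasureTheory.setLIntegral_const, Real.volume_Ioo,
            ENNReal.ofReal_mul hL, sub_zero]
      _ = ∫⁻ x in Set.Ioo 0 T, Measure.rnDeriv S.measure volume x ∂volume :=
          (lintegral_congr_ae h2).symm
      _ ≤ S.measure (Set.Ioo 0 T) := Measure.setLIntegral_rnDeriv_le _
      _ ≤ S.measure (Set.Ioc 0 T) := measure_mono Set.Ioo_subset_Ioc_self
      _ = ENNReal.ofReal (f T - f 0) := S.measure_Ioc 0 T
  exact (ENNReal.ofReal_le_ofReal_iff (sub_nonneg.2 (hf hT))).1 hcalc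

lemma const_of_lip_of_ae_deriv_zero {G : ℝ → ℝ} {T L : ℝ} (hT : 0 ≤ T) (hL : 0 ≤ L)
    (hlip : ∀ a ∈ Set.Icc 0 T, ∀ b ∈ Set.Icc 0 T, |G a - G b| ≤ L * |a - b|)
    (hd : ∀ᵐ x ∂(volume.restrict (Set.Ioo 0 T)), HasDerivAt G 0 x) :
    G T = G 0 := by
  set c : ℝ → ℝ := fun x => max 0 (min x T) with hc
  have hcmem : ∀ x, c x ∈ Set.Icc 0 T := fun x =>
    ⟨le_max_left _ _, max_le hT (min_le_right _ _)⟩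
  have hclip : ∀ x y, |c x - c y| ≤ |x - y| := by
    intro x y
    have h1 : |min x T - min y T| ≤ |x - y| :=
      (abs_min_sub_min_le_max x T y T).trans (by simp)
    calc |c x - c y| ≤ |min x T - min y T| := by
          simpa [hc, max_comm] using abs_max_sub_max_le_abs (min x T) (min y T) 0
      _ ≤ |x - y| := h1
  have hc0 : c 0 = 0 := by simp [hc, hT]
  have hcT : c T = T := by simp [hc, hT]
  have main : ∀ (σ : ℝ), σ = 1 ∨ σ = -1 → 0 ≤ σ * (G T - G 0) := by
    intro σ hσ
    set u : ℝ → ℝ := fun x => σ * G (c x) + L * x with hu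
    have humono : Monotone u := by
      intro x y hxy
      have h1 := hlip (c y) (hcmem y) (c x) (hcmem x)
      have h2 := (hclip y x).trans_eq (abs_of_nonneg (by linarith) : |y - x| = y - x)
      have hσ1 : |σ| = 1 := by rcases hσ with rfl | rfl <;> simp
      have h3 : |σ * G (c y) - σ * G (c x)| ≤ L * (y - x) := by
        rw [← mul_sub, abs_mul, hσ1, one_mul]
        exact h1.trans (by nlinarith [abs_nonneg (c y - c x)])
      have h4 := (abs_sub_le_iff.1 h3).2
      simp only [hu]
      nlinarith
    have hucont : Continuous u := by
      have : LipschitzWith (Real.toNNReal L + Real.toNNReal L + 1) u := by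
        apply LipschitzWith.of_dist_le_mul
        intro x y
        rw [Real.dist_eq, Real.dist_eq]
        have h1 := hlip (c x) (hcmem x) (c y) (hcmem y)
        have h2 := hclip x y
        have hσ1 : |σ| = 1 := by rcases hσ with rfl | rfl <;> simp
        have h3 : |σ * G (c x) - σ * G (c y)| ≤ L * |x - y| := by
          rw [← mul_sub, abs_mul, hσ1, one_mul]
          exact h1.trans (by nlinarith [abs_nonneg (x - y), abs_nonneg (c x - c y)])
        have h4 : |u x - u y| ≤ |σ * G (c x) - σ * G (c y)| + |L * x - L * y| := by
          simp only [hu]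
          calc |σ * G (c x) + L * x - (σ * G (c y) + L * y)|
              = |(σ * G (c x) - σ * G (c y)) + (L * x - L * y)| := by ring_nf
            _ ≤ _ := abs_add_le _ _
        have h5 : |L * x - L * y| = L * |x - y| := by
          rw [← mul_sub, abs_mul, abs_of_nonneg hL]
        push_cast
        rw [Real.coe_toNNReal _ hL]
        nlinarith [abs_nonneg (x - y)]
      exact this.continuous
    have huderiv : ∀ᵐ x ∂(volume.restrict (Set.Ioo 0 T)), HasDerivAt u L x := by
      filter_upwards [hd, ae_restrict_mem measurableSet_Ioo] with x hx hmem
      have hGc : HasDerivAt (fun y => σ * G (c y)) 0 x := by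
        have hG : HasDerivAt (fun y => σ * G y) 0 x := by simpa using hx.const_mul σ
        apply hG.congr_of_eventuallyEq
        filter_upwards [Ioo_mem_nhds hmem.1 hmem.2] with y hy
        have : c y = y := by
          simp [hc, min_eq_left hy.2.le, max_eq_right hy.1.le]
        rw [this]
      simpa using hGc.fun_add ((hasDerivAt_id x).const_mul L)
    have hkey := key_mono humono hucont hT hL huderiv
    have huT : u T = σ * G T + L * T := by rw [hu]; simp [hcT]
    have hu0 : u 0 = σ * G 0 := by rw [hu]; simp [hc0]
    rw [huT, hu0] at hkey
    nlinarith
  have h1 := main 1 (Or.inl rfl)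
  have h2 := main (-1) (Or.inr rfl)
  nlinarith

end Aux

set_option maxHeartbeats 1000000 in
open MeasureTheory in
/-- Along absolutely continuous (here: Lipschitz) solutions of the differential inclusion
`dp/dt ∈ X·BR_p(q) + α p̄ − p`, `dq/dt ∈ Y·BR_q(p) + α q̄ − q`, one has `dH/dt = −H` a.e.
and hence `H(p(t),q(t)) = H(p(0),q(0)) e^{−t}`. -/
theorem H_decays_exponentially {m n : ℕ}
    (M : Matrix (Fin m) (Fin n) ℝ)
    (X : Matrix (Fin m) (Fin m) ℝ) (Y : Matrix (Fin n) (Fin n) ℝ)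
    (hXY : M * Y = Xᵀ * M) (α : ℝ)
    (pbar : Fin m → ℝ) (qbar : Fin n → ℝ)
    (hpbar : pbar ∈ stdSimplex ℝ (Fin m)) (hqbar : qbar ∈ stdSimplex ℝ (Fin n))
    (hppos : ∀ i, 0 < pbar i) (hqpos : ∀ j, 0 < qbar j)
    (hmax : ∀ p' ∈ stdSimplex ℝ (Fin m), p' ⬝ᵥ M *ᵥ qbar ≤ pbar ⬝ᵥ M *ᵥ qbar)
    (hmin : ∀ q' ∈ stdSimplex ℝ (Fin n), pbar ⬝ᵥ M *ᵥ qbar ≤ pbar ⬝ᵥ M *ᵥ q')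
    (p : ℝ → Fin m → ℝ) (q : ℝ → Fin n → ℝ)
    (K : NNReal) (hLp : LipschitzWith K p) (hLq : LipschitzWith K q)
    (hsol : ∀ᵐ t ∂(volume.restrict (Set.Ici (0 : ℝ))),
      ∃ b ∈ {b ∈ stdSimplex ℝ (Fin m) |
          ∀ p' ∈ stdSimplex ℝ (Fin m), p' ⬝ᵥ M *ᵥ (q t) ≤ b ⬝ᵥ M *ᵥ (q t)},
      ∃ c ∈ {c ∈ stdSimplex ℝ (Fin n) |
          ∀ q' ∈ stdSimplex ℝ (Fin n), (p t) ⬝ᵥ M *ᵥ c ≤ (p t) ⬝ᵥ M *ᵥ q'},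
        HasDerivAt p (X *ᵥ b + α • pbar - p t) t ∧
        HasDerivAt q (Y *ᵥ c + α • qbar - q t) t) :
    (∀ᵐ t ∂(volume.restrict (Set.Ici (0 : ℝ))),
      HasDerivAt (fun s => H M (p s) (q s)) (-(H M (p t) (q t))) t) ∧
    ∀ t : ℝ, 0 ≤ t → H M (p t) (q t) = H M (p 0) (q 0) * Real.exp (-t) := by
  have hm0 : m ≠ 0 := by rintro rfl; exact absurd hpbar.2 (by simp)
  have hn0 : n ≠ 0 := by rintro rfl; exact absurd hqbar.2 (by simp)
  haveI : Nonempty (Fin m) := Fin.pos_iff_nonempty.mp (Nat.pos_of_ne_zero hm0)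
  haveI : Nonempty (Fin n) := Fin.pos_iff_nonempty.mp (Nat.pos_of_ne_zero hn0)
  set v : ℝ := pbar ⬝ᵥ M *ᵥ qbar with hv
  -- row values all equal v
  have hrowle : ∀ i, (M *ᵥ qbar) i ≤ v := by
    intro i
    have := hmax (Pi.single i 1) (single_mem_stdSimplex ℝ i)
    simpa [single_dotProduct] using this
  have hrow : ∀ i, (M *ᵥ qbar) i = v := by
    intro i
    by_contra hne
    have hlt : (M *ᵥ qbar) i < v := lt_of_le_of_ne (hrowle i) hne
    have hsum : v = ∑ j, pbar j * (M *ᵥ qbar) j := rfl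
    have hstrict : ∑ j, pbar j * (M *ᵥ qbar) j < ∑ j, pbar j * v := by
      apply Finset.sum_lt_sum (fun j _ => mul_le_mul_of_nonneg_left (hrowle j) (hpbar.1 j))
      exact ⟨i, Finset.mem_univ i, mul_lt_mul_of_pos_left hlt (hppos i)⟩
    rw [← Finset.sum_mul, hpbar.2, one_mul] at hstrict
    linarith
  have hcolge : ∀ j, v ≤ (pbar ᵥ* M) j := by
    intro j
    have := hmin (Pi.single j 1) (single_mem_stdSimplex ℝ j)
    have h' : v ≤ pbar ⬝ᵥ M.col j := by simpa [Matrix.dotProduct_mulVec, dotProduct_single] using this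
    exact h'
  have hcol : ∀ j, (pbar ᵥ* M) j = v := by
    intro j
    by_contra hne
    have hlt : v < (pbar ᵥ* M) j := lt_of_le_of_ne (hcolge j) (fun h => hne h.symm)
    have hsum : v = ∑ i, (pbar ᵥ* M) i * qbar i := by rw [hv, Matrix.dotProduct_mulVec]; rfl
    have hstrict : ∑ i, v * qbar i < ∑ i, (pbar ᵥ* M) i * qbar i := by
      apply Finset.sum_lt_sum (fun i _ => mul_le_mul_of_nonneg_right (hcolge i) (hqbar.1 i))
      exact ⟨j, Finset.mem_univ j, mul_lt_mul_of_pos_right hlt (hqpos j)⟩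
    rw [← Finset.mul_sum, hqbar.2, mul_one] at hstrict
    linarith
  have hvalp : ∀ b ∈ stdSimplex ℝ (Fin m), b ⬝ᵥ M *ᵥ qbar = v := by
    intro b hb
    calc b ⬝ᵥ M *ᵥ qbar = ∑ i, b i * (M *ᵥ qbar) i := rfl
      _ = ∑ i, b i * v := by simp_rw [hrow]
      _ = v := by rw [← Finset.sum_mul, hb.2, one_mul]
  have hvalq : ∀ c ∈ stdSimplex ℝ (Fin n), pbar ⬝ᵥ M *ᵥ c = v := by
    intro c hc
    calc pbar ⬝ᵥ M *ᵥ c = ∑ j, (pbar ᵥ* M) j * c j := by rw [Matrix.dotProduct_mulVec]; rfl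
      _ = ∑ j, v * c j := by simp_rw [hcol]
      _ = v := by rw [← Finset.mul_sum, hc.2, mul_one]
  -- the two halves of H
  set Φ : ℝ → ℝ := fun s => sSup ((fun p' => p' ⬝ᵥ M *ᵥ q s) '' stdSimplex ℝ (Fin m)) with hΦdef
  set Ψ : ℝ → ℝ := fun s => sInf ((fun q' => p s ⬝ᵥ M *ᵥ q') '' stdSimplex ℝ (Fin n)) with hΨdef
  have hHΦΨ : (fun s => H M (p s) (q s)) = fun s => Φ s - Ψ s := rfl
  have hΦformula : ∀ s, Φ s = Finset.univ.sup' Finset.univ_nonempty (fun i => (M *ᵥ q s) i) :=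
    fun s => (isGreatest_simplex_dot M (q s)).csSup_eq
  have hΨformula : ∀ s, Ψ s = Finset.univ.inf' Finset.univ_nonempty (fun j => (p s ᵥ* M) j) :=
    fun s => (isLeast_simplex_dot M (p s)).csInf_eq
  -- Lipschitz bounds
  set CLMq : (Fin n → ℝ) →L[ℝ] (Fin m → ℝ) := LinearMap.toContinuousLinearMap (Matrix.mulVecLin M)
    with hCLMq
  set CLMp : (Fin m → ℝ) →L[ℝ] (Fin n → ℝ) := LinearMap.toContinuousLinearMap (Matrix.vecMulLinear M)
    with hCLMp
  have hΦlip : LipschitzWith (1 * (‖CLMq‖₊ * K)) Φ := by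
    have hcomp := (lipschitzWith_sup' (ι := Fin m)).comp ((CLMq.lipschitz).comp hLq)
    have heq : Φ = (fun v : Fin m → ℝ => Finset.univ.sup' Finset.univ_nonempty (fun i => v i)) ∘
        (fun s => CLMq (q s)) := by
      funext s
      rw [hΦformula s]
      rfl
    rw [heq]
    exact hcomp
  have hΨlip : LipschitzWith (1 * (‖CLMp‖₊ * K)) Ψ := by
    have hcomp := (lipschitzWith_inf' (ι := Fin n)).comp ((CLMp.lipschitz).comp hLp)
    have heq : Ψ = (fun v : Fin n → ℝ => Finset.univ.inf' Finset.univ_nonempty (fun i => v i)) ∘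
        (fun s => CLMp (p s)) := by
      funext s
      rw [hΨformula s]
      rfl
    rw [heq]
    exact hcomp
  have hΦd : ∀ᵐ t ∂(volume : Measure ℝ), DifferentiableAt ℝ Φ t := hΦlip.ae_differentiableAt
  have hΨd : ∀ᵐ t ∂(volume : Measure ℝ), DifferentiableAt ℝ Ψ t := hΨlip.ae_differentiableAt
  -- Part I
  have part1 : ∀ᵐ t ∂(volume.restrict (Set.Ici (0:ℝ))),
      HasDerivAt (fun s => H M (p s) (q s)) (-(H M (p t) (q t))) t := by
    filter_upwards [hsol, ae_restrict_of_ae hΦd, ae_restrict_of_ae hΨd] with t ht hΦdt hΨdt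
    obtain ⟨b, ⟨hbS, hbmax⟩, c, ⟨hcS, hcmin⟩, hdp, hdq⟩ := ht
    have hΦt : Φ t = b ⬝ᵥ M *ᵥ q t :=
      IsGreatest.csSup_eq ⟨⟨b, hbS, rfl⟩, by rintro x ⟨p', hp', rfl⟩; exact hbmax p' hp'⟩
    have hΨt : Ψ t = p t ⬝ᵥ M *ᵥ c :=
      IsLeast.csInf_eq ⟨⟨c, hcS, rfl⟩, by rintro x ⟨q', hq', rfl⟩; exact hcmin q' hq'⟩
    have hΦle : ∀ s, b ⬝ᵥ M *ᵥ q s ≤ Φ s := fun s =>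
      (hΦformula s) ▸ (isGreatest_simplex_dot M (q s)).2 ⟨b, hbS, rfl⟩
    have hΨge : ∀ s, Ψ s ≤ p s ⬝ᵥ M *ᵥ c := fun s =>
      (hΨformula s) ▸ (isLeast_simplex_dot M (p s)).2 ⟨c, hcS, rfl⟩
    have hΦderiv : HasDerivAt Φ (b ⬝ᵥ M *ᵥ (Y *ᵥ c + α • qbar - q t)) t :=
      hasDerivAt_of_le_of_eq hΦle hΦt.symm (hasDerivAt_dot_mulVec_right M b hdq) hΦdt
    have hΨderiv : HasDerivAt Ψ ((X *ᵥ b + α • pbar - p t) ⬝ᵥ M *ᵥ c) t :=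
      hasDerivAt_of_ge_of_eq hΨge hΨt.symm (hasDerivAt_dot_mulVec_left M c hdp) hΨdt
    have hD := hΦderiv.sub hΨderiv
    have hcompute : b ⬝ᵥ M *ᵥ (Y *ᵥ c + α • qbar - q t) - (X *ᵥ b + α • pbar - p t) ⬝ᵥ M *ᵥ c
        = -(H M (p t) (q t)) := by
      have h1 : b ⬝ᵥ M *ᵥ (Y *ᵥ c) = (X *ᵥ b) ⬝ᵥ M *ᵥ c := by
        rw [Matrix.mulVec_mulVec, hXY, ← Matrix.mulVec_mulVec,
          Matrix.dotProduct_mulVec b Xᵀ, Matrix.vecMul_transpose]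
      have h2 := hvalp b hbS
      have h3 := hvalq c hcS
      have hHt : H M (p t) (q t) = Φ t - Ψ t := rfl
      rw [hHt, hΦt, hΨt]
      simp only [Matrix.mulVec_add, Matrix.mulVec_sub, dotProduct_add,
        dotProduct_sub, add_dotProduct, sub_dotProduct,
        Matrix.mulVec_smul, dotProduct_smul, smul_dotProduct, smul_eq_mul]
      rw [h1, h2, h3]
      ring
    rw [hHΦΨ, ← hcompute]
    exact hD
  refine ⟨part1, ?_⟩
  intro T hT
  set F : ℝ → ℝ := fun s => H M (p s) (q s) with hFdef
  set CF : ℝ := ((1 * (‖CLMq‖₊ * K) : NNReal) : ℝ) + ((1 * (‖CLMp‖₊ * K) : NNReal) : ℝ) with hCF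
  have hCF0 : 0 ≤ CF := by positivity
  have hFdist : ∀ a b : ℝ, |F a - F b| ≤ CF * |a - b| := by
    intro a b
    have h1 := hΦlip.dist_le_mul a b
    have h2 := hΨlip.dist_le_mul a b
    rw [Real.dist_eq, Real.dist_eq] at h1 h2
    have : F a - F b = (Φ a - Φ b) - (Ψ a - Ψ b) := by
      have hFa : F a = Φ a - Ψ a := rfl
      have hFb : F b = Φ b - Ψ b := rfl
      rw [hFa, hFb]; ring
    rw [this, hCF]
    calc |Φ a - Φ b - (Ψ a - Ψ b)| ≤ |Φ a - Φ b| + |Ψ a - Ψ b| := abs_sub _ _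
      _ ≤ _ := by rw [add_mul]; exact add_le_add h1 h2
  set G : ℝ → ℝ := fun s => F s * Real.exp s with hGdef
  have hGd : ∀ᵐ x ∂(volume.restrict (Set.Ioo (0:ℝ) T)), HasDerivAt G 0 x := by
    have hsub : Set.Ioo (0:ℝ) T ⊆ Set.Ici (0:ℝ) := fun x hx => le_of_lt hx.1
    filter_upwards [ae_restrict_of_ae_restrict_of_subset hsub part1] with x hx
    have h2 := hx.mul (Real.hasDerivAt_exp x)
    have h0 : -(H M (p x) (q x)) * Real.exp x + H M (p x) (q x) * Real.exp x = 0 := by ring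
    rw [h0] at h2
    exact h2
  set B : ℝ := |F 0| + CF * T with hB
  have hB0 : 0 ≤ B := add_nonneg (abs_nonneg _) (mul_nonneg hCF0 hT)
  set L : ℝ := (CF + B) * Real.exp T with hL
  have hL0 : 0 ≤ L := mul_nonneg (by linarith) (Real.exp_pos T).le
  have hexpbound : ∀ a b : ℝ, b ≤ a → a ≤ T →
      Real.exp a - Real.exp b ≤ (a - b) * Real.exp T := by
    intro a b hba haT
    have h1 := Real.add_one_le_exp (b - a)
    have h2 : Real.exp (b - a) = Real.exp b / Real.exp a := by rw [Real.exp_sub]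
    have h3 : Real.exp a ≤ Real.exp T := Real.exp_le_exp.2 haT
    have h4 := Real.exp_pos a
    rw [h2] at h1
    have h5 : (b - a + 1) * Real.exp a ≤ Real.exp b := (le_div_iff₀ h4).1 h1
    have h6 : (b - a + 1) * Real.exp a = Real.exp a - (a - b) * Real.exp a := by ring
    have h7 : (a - b) * Real.exp a ≤ (a - b) * Real.exp T :=
      mul_le_mul_of_nonneg_left h3 (sub_nonneg.2 hba)
    linarith
  have hGlip : ∀ a ∈ Set.Icc (0:ℝ) T, ∀ b ∈ Set.Icc (0:ℝ) T, |G a - G b| ≤ L * |a - b| := by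
    intro a ha b hb
    have hFb : |F b| ≤ B := by
      have h1 := hFdist b 0
      rw [sub_zero] at h1
      have habs : |b| ≤ T := by rw [abs_of_nonneg hb.1]; exact hb.2
      calc |F b| = |(F b - F 0) + F 0| := by ring_nf
        _ ≤ |F b - F 0| + |F 0| := abs_add_le _ _
        _ ≤ CF * |b| + |F 0| := by linarith
        _ ≤ CF * T + |F 0| := add_le_add_left (mul_le_mul_of_nonneg_left habs hCF0) _
        _ = B := by rw [hB]; ring
    have hee : |Real.exp a - Real.exp b| ≤ Real.exp T * |a - b| := by
      rcases le_total b a with h | h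
      · rw [abs_of_nonneg (sub_nonneg.2 (Real.exp_le_exp.2 h)), abs_of_nonneg (sub_nonneg.2 h)]
        have := hexpbound a b h ha.2
        linarith [this, mul_comm (a - b) (Real.exp T)]
      · rw [abs_of_nonpos (sub_nonpos.2 (Real.exp_le_exp.2 h)), abs_of_nonpos (sub_nonpos.2 h)]
        have := hexpbound b a h hb.2
        nlinarith
    have hGG : G a - G b = (F a - F b) * Real.exp a + F b * (Real.exp a - Real.exp b) := by
      have hGa : G a = F a * Real.exp a := rfl
      have hGb : G b = F b * Real.exp b := rfl
      rw [hGa, hGb]; ring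
    calc |G a - G b| ≤ |F a - F b| * Real.exp a + |F b| * |Real.exp a - Real.exp b| := by
          rw [hGG]
          refine (abs_add_le _ _).trans ?_
          rw [abs_mul, abs_mul, abs_of_pos (Real.exp_pos a)]
      _ ≤ (CF * |a - b|) * Real.exp T + B * (Real.exp T * |a - b|) := by
          refine add_le_add ?_ ?_
          · exact mul_le_mul (hFdist a b) (Real.exp_le_exp.2 ha.2) (Real.exp_pos a).le
              (mul_nonneg hCF0 (abs_nonneg _))
          · exact mul_le_mul hFb hee (abs_nonneg _) hB0
      _ = L * |a - b| := by rw [hL]; ring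
  have hG0 : G T = G 0 := const_of_lip_of_ae_deriv_zero hT hL0 hGlip hGd
  have hGT : F T * Real.exp T = F 0 := by
    have hGTeq : G T = F T * Real.exp T := rfl
    have hG0eq : G 0 = F 0 * Real.exp 0 := rfl
    rw [hGTeq, hG0eq, Real.exp_zero, mul_one] at hG0
    exact hG0
  have : F T = F 0 * Real.exp (-T) := by
    rw [Real.exp_neg, ← hGT]
    field_simp
  exact this
end

section
/- Along any solution of the best-response dynamics dp/dt ∈ BR_p(q) − p, dq/dt ∈ BR_q(p) − q for a zero-sum game with completely mixed Nash equilibrium, the solution converges to the set of Nash equilibria: H(p(t),q(t)) = H(p(0),q(0)) e^{−t} → 0 as t → ∞. -/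
open Matrix

open Set Filter MeasureTheory

theorem BRfencing {f B : ℝ → ℝ} {a b : ℝ}
    (hf : ContinuousOn f (Icc a b)) (hB : ContinuousOn B (Icc a b)) (ha : f a ≤ B a)
    (key : ∀ x ∈ Ico a b, f x = B x → ∃ r : ℝ,
      (∃ᶠ z in nhdsWithin x (Ioi x), slope f x z < r) ∧
      (∀ᶠ z in nhdsWithin x (Ioi x), r < slope B x z)) :
    ∀ ⦃x⦄, x ∈ Icc a b → f x ≤ B x := by
  change Icc a b ⊆ { x | f x ≤ B x }
  set s := { x | f x ≤ B x } ∩ Icc a b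
  have A : ContinuousOn (fun x => (f x, B x)) (Icc a b) := hf.prodMk hB
  have hcl : IsClosed s := by
    simp only [s, inter_comm]
    exact A.preimage_isClosed_of_isClosed isClosed_Icc OrderClosedTopology.isClosed_le'
  apply hcl.Icc_subset_of_forall_exists_gt ha
  rintro x ⟨hxB : f x ≤ B x, xab⟩ y hy
  cases' hxB.lt_or_eq with hxB hxB
  · refine nonempty_of_mem (inter_mem ?_ (Ioc_mem_nhdsGT_of_mem ⟨le_rfl, hy⟩))
    have h1 : ∀ᶠ x in nhdsWithin x (Icc a b), f x < B x :=
      A x (Ico_subset_Icc_self xab) (IsOpen.mem_nhds (isOpen_lt continuous_fst continuous_snd) hxB)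
    have h2 : ∀ᶠ x in nhdsWithin x (Ioi x), f x < B x :=
      nhdsWithin_le_of_mem (Icc_mem_nhdsGT_of_mem xab) h1
    exact h2.mono fun y => le_of_lt
  · obtain ⟨r, hfr, hBr⟩ := key x xab hxB
    obtain ⟨z, hfz, hzB, hz⟩ : ∃ z, slope f x z < r ∧ r < slope B x z ∧ z ∈ Ioc x y :=
      (hfr.and_eventually (hBr.and (Ioc_mem_nhdsGT_of_mem ⟨le_rfl, hy⟩))).exists
    refine ⟨z, ?_, hz⟩
    have := (hfz.trans hzB).le
    rwa [slope_def_field, slope_def_field, div_le_div_iff_of_pos_right (sub_pos.2 hz.1), hxB,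
      sub_le_sub_iff_right] at this

theorem BRhalf {f : ℝ → ℝ} {a b L : ℝ} (hL : 0 ≤ L) (hab : a ≤ b)
    (hfc : ContinuousOn f (Icc a b))
    (hlip : ∀ x ∈ Icc a b, ∀ z ∈ Icc a b, |f z - f x| ≤ L * |z - x|)
    {E : Set ℝ} (hE : volume E = 0)
    (hd : ∀ x ∈ Ico a b, x ∉ E → HasDerivAt f 0 x) : f b ≤ f a := by
  have main : ∀ ε : ℝ, 0 < ε → f b - f a ≤ ε * (b - a + L + 1) := by
    intro ε hε
    have hEi : volume (E ∩ Icc a b) = 0 := measure_inter_null_of_null_left _ hE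
    obtain ⟨U, hEU, hUopen, hUvol⟩ : ∃ U, E ∩ Icc a b ⊆ U ∧ IsOpen U ∧
        volume U < ENNReal.ofReal ε := by
      refine Set.exists_isOpen_lt_of_lt _ _ ?_
      rw [hEi]; exact ENNReal.ofReal_pos.2 hε
    set g : ℝ → ℝ := fun y => ε + (L + 1) * U.indicator (fun _ => (1:ℝ)) y with hg
    have hgmeas : Measurable g :=
      measurable_const.add (measurable_const.mul
        (measurable_one.indicator hUopen.measurableSet))
    have hgnonneg : ∀ y, ε ≤ g y := by
      intro y
      show ε ≤ ε + (L + 1) * U.indicator (fun _ => (1:ℝ)) y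
      have : (0:ℝ) ≤ U.indicator (fun _ => (1:ℝ)) y :=
        Set.indicator_nonneg (fun _ _ => zero_le_one) y
      have h2 := mul_nonneg (by linarith : (0:ℝ) ≤ L + 1) this
      linarith
    have hgle : ∀ y, g y ≤ ε + (L + 1) := by
      intro y
      by_cases hy : y ∈ U
      · simp [hg, Set.indicator_of_mem hy]
      · simp [hg, Set.indicator_of_notMem hy]
        positivity
    have hgint : ∀ x z : ℝ, IntervalIntegrable g volume x z := by
      intro x z
      refine IntervalIntegrable.mono_fun' (g := fun _ => ε + (L + 1))
        intervalIntegrable_const hgmeas.aestronglyMeasurable ?_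
      filter_upwards with y
      rw [Real.norm_eq_abs, abs_of_nonneg ((le_of_lt hε).trans (hgnonneg y))]
      exact hgle y
    set B : ℝ → ℝ := fun x => ∫ y in a..x, g y with hB
    have hBcont : Continuous B := intervalIntegral.continuous_primitive hgint a
    have hBsub : ∀ x z : ℝ, B z - B x = ∫ y in x..z, g y := by
      intro x z
      rw [hB]
      simp only
      rw [sub_eq_iff_eq_add, add_comm]
      exact (intervalIntegral.integral_add_adjacent_intervals (hgint a x) (hgint x z)).symm
    -- lower bound for slope of B for arbitrary z > x
    have hslopeB : ∀ x z : ℝ, x < z → ε ≤ slope B x z := by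
      intro x z hxz
      rw [slope_def_field, hBsub, le_div_iff₀ (by linarith)]
      calc ε * (z - x) = ∫ _ in x..z, ε := by
            rw [intervalIntegral.integral_const, smul_eq_mul]; ring
        _ ≤ ∫ y in x..z, g y := by
            apply intervalIntegral.integral_mono_on hxz.le intervalIntegrable_const (hgint x z)
            intro y _; exact hgnonneg y
    -- apply the BRfencing lemma to f - f a and B
    have key : ∀ x ∈ Ico a b, (fun x => f x - f a) x = B x → ∃ r : ℝ,
        (∃ᶠ z in nhdsWithin x (Ioi x), slope (fun x => f x - f a) x z < r) ∧
        (∀ᶠ z in nhdsWithin x (Ioi x), r < slope B x z) := by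
      intro x hx _
      have hslopef : ∀ z, slope (fun x => f x - f a) x z = slope f x z := by
        intro z
        rw [slope_def_field, slope_def_field]
        ring_nf
      by_cases hxU : x ∈ U
      · refine ⟨L + ε / 2, ?_, ?_⟩
        · have hev : ∀ᶠ z in nhdsWithin x (Ioi x),
              slope (fun x => f x - f a) x z < L + ε / 2 := by
            filter_upwards [Ioc_mem_nhdsGT_of_mem (Set.mem_Ico.2 ⟨le_rfl, hx.2⟩)] with z hz
            rw [hslopef, slope_def_field]
            have hzx : 0 < z - x := by
              have := hz.1; linarith
            have hzI : z ∈ Icc a b := ⟨hx.1.trans hz.1.le, hz.2⟩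
            have := hlip x (Ico_subset_Icc_self hx) z hzI
            rw [abs_of_pos hzx] at this
            have h1 : f z - f x ≤ L * (z - x) := (le_abs_self _).trans this
            rw [div_lt_iff₀ hzx]
            nlinarith
          exact hev.frequently
        · -- slope of B is ≥ ε + L + 1 near x inside U
          obtain ⟨δ, hδ, hball⟩ := Metric.mem_nhds_iff.1 (hUopen.mem_nhds hxU)
          filter_upwards [Ioo_mem_nhdsGT_of_mem
            (Set.mem_Ico.2 ⟨le_rfl, lt_add_of_pos_right x hδ⟩)] with z hz
          have hxz : x < z := hz.1
          rw [slope_def_field, hBsub, lt_div_iff₀ (by linarith)]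
          have hsub : Set.Icc x z ⊆ U := by
            intro y hy
            apply hball
            simp only [Metric.mem_ball, Real.dist_eq, abs_lt]
            constructor <;> [linarith [hy.1]; linarith [hy.2, hz.2]]
          calc (L + ε / 2) * (z - x) < (ε + L + 1) * (z - x) := by nlinarith
            _ = ∫ _ in x..z, (ε + L + 1) := by
                rw [intervalIntegral.integral_const, smul_eq_mul]; ring
            _ ≤ ∫ y in x..z, g y := by
                apply intervalIntegral.integral_mono_on hxz.le intervalIntegrable_const
                  (hgint x z)
                intro y hy
                rw [hg]
                simp only [Set.indicator_of_mem (hsub hy)]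
                ring_nf
                exact le_rfl
      · have hxE : x ∉ E := fun hxE => hxU (hEU ⟨hxE, Ico_subset_Icc_self hx⟩)
        have hder : HasDerivAt (fun x => f x - f a) 0 x := by
          simpa using (hd x hx hxE).sub_const (f a)
        refine ⟨ε / 2, ?_, ?_⟩
        · exact hder.hasDerivWithinAt.liminf_right_slope_le (by linarith)
        · filter_upwards [self_mem_nhdsWithin] with z hz
          exact lt_of_lt_of_le (by linarith) (hslopeB x z hz)
    have hfence := BRfencing (hfc.sub continuousOn_const) hBcont.continuousOn
      (by simp [hB]) key (right_mem_Icc.2 hab)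
    -- now bound B b
    have hBb : B b ≤ ε * (b - a + L + 1) := by
      have hint : (∫ y in a..b, g y) = ε * (b - a) +
          (L + 1) * ∫ y in a..b, U.indicator (fun _ => (1:ℝ)) y := by
        have hind : IntervalIntegrable (U.indicator (fun _ => (1:ℝ))) volume a b := by
          refine IntervalIntegrable.mono_fun' (g := fun _ => (1:ℝ))
            intervalIntegrable_const
            (measurable_one.indicator hUopen.measurableSet).aestronglyMeasurable ?_
          filter_upwards with y
          rw [Real.norm_eq_abs, abs_of_nonneg (Set.indicator_nonneg (fun _ _ => zero_le_one) y)]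
          classical
          by_cases hy : y ∈ U <;> simp [Set.indicator_of_mem, Set.indicator_of_notMem, hy]
        rw [hg]
        rw [intervalIntegral.integral_add intervalIntegrable_const (hind.const_mul _)]
        rw [intervalIntegral.integral_const, intervalIntegral.integral_const_mul, smul_eq_mul]
        ring
      have hindle : (∫ y in a..b, U.indicator (fun _ => (1:ℝ)) y) ≤ ε := by
        rw [intervalIntegral.integral_of_le hab,
          MeasureTheory.setIntegral_indicator hUopen.measurableSet]
        rw [MeasureTheory.setIntegral_const, smul_eq_mul, mul_one]
        exact ENNReal.toReal_le_of_le_ofReal hε.le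
          (le_of_lt (lt_of_le_of_lt (measure_mono Set.inter_subset_right) hUvol))
      rw [hB]
      simp only
      rw [hint]
      nlinarith
    have := hfence
    simp only [Pi.sub_apply] at this
    linarith
  -- conclude
  by_contra hcon
  push_neg at hcon
  set C := b - a + L + 1 with hCdef
  have hC : 0 < C := by simp only [hCdef]; linarith
  have hmain := main ((f b - f a) / (2 * C)) (div_pos (by linarith) (by linarith))
  have heq : (f b - f a) / (2 * C) * C = (f b - f a) / 2 := by field_simp
  rw [heq] at hmain
  linarith

theorem BRconst {f : ℝ → ℝ} {a b L : ℝ} (hL : 0 ≤ L) (hab : a ≤ b)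
    (hfc : ContinuousOn f (Icc a b))
    (hlip : ∀ x ∈ Icc a b, ∀ z ∈ Icc a b, |f z - f x| ≤ L * |z - x|)
    {E : Set ℝ} (hE : volume E = 0)
    (hd : ∀ x ∈ Ico a b, x ∉ E → HasDerivAt f 0 x) : f b = f a := by
  refine le_antisymm (BRhalf hL hab hfc hlip hE hd) ?_
  have h1 : (fun x => -f x) b ≤ (fun x => -f x) a := by
    refine BRhalf (f := fun x => -f x) (a := a) (b := b) hL hab hfc.neg ?_ hE ?_
    · intro x hx z hz
      have := hlip x hx z hz
      calc |(-f z) - (-f x)| = |f z - f x| := by rw [← abs_neg]; ring_nf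
        _ ≤ L * |z - x| := this
    · intro x hx hxE
      have := (hd x hx hxE).neg; rw [neg_zero] at this; exact this
  simpa using h1

lemma BRdot_bound {m n : ℕ} (M : Matrix (Fin m) (Fin n) ℝ) (v : Fin m → ℝ)
    (hv : v ∈ stdSimplex ℝ (Fin m)) (u : Fin n → ℝ) :
    |v ⬝ᵥ M *ᵥ u| ≤ (∑ i, ∑ j, |M i j|) * ‖u‖ := by
  have hvle : ∀ i, v i ≤ 1 := by
    intro i
    calc v i ≤ ∑ i, v i := Finset.single_le_sum (fun i _ => hv.1 i) (Finset.mem_univ i)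
      _ = 1 := hv.2
  have hdp : v ⬝ᵥ M *ᵥ u = ∑ i, v i * (M *ᵥ u) i := by
    simp [dotProduct]
  rw [hdp]
  calc |∑ i, v i * (M *ᵥ u) i| ≤ ∑ i, |v i * (M *ᵥ u) i| := Finset.abs_sum_le_sum_abs _ _
    _ ≤ ∑ i, (∑ j, |M i j|) * ‖u‖ := by
        apply Finset.sum_le_sum
        intro i _
        rw [abs_mul, abs_of_nonneg (hv.1 i)]
        have h1 : |(M *ᵥ u) i| ≤ (∑ j, |M i j|) * ‖u‖ := by
          have hmv : (M *ᵥ u) i = ∑ j, M i j * u j := by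
            simp [Matrix.mulVec, dotProduct]
          rw [hmv]
          calc |∑ j, M i j * u j| ≤ ∑ j, |M i j * u j| := Finset.abs_sum_le_sum_abs _ _
            _ ≤ ∑ j, |M i j| * ‖u‖ := by
                apply Finset.sum_le_sum
                intro j _
                rw [abs_mul]
                refine mul_le_mul_of_nonneg_left ?_ (abs_nonneg _)
                exact (Real.norm_eq_abs (u j)) ▸ norm_le_pi_norm u j
            _ = (∑ j, |M i j|) * ‖u‖ := by rw [Finset.sum_mul]
        have h2 : 0 ≤ (∑ j, |M i j|) * ‖u‖ := le_trans (abs_nonneg _) h1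
        calc v i * |(M *ᵥ u) i| ≤ 1 * ((∑ j, |M i j|) * ‖u‖) :=
              mul_le_mul (hvle i) h1 (abs_nonneg _) zero_le_one
          _ = _ := one_mul _
    _ = (∑ i, ∑ j, |M i j|) * ‖u‖ := by rw [Finset.sum_mul]

lemma BRdot_bound' {m n : ℕ} (M : Matrix (Fin m) (Fin n) ℝ) (w : Fin n → ℝ)
    (hw : w ∈ stdSimplex ℝ (Fin n)) (u : Fin m → ℝ) :
    |u ⬝ᵥ M *ᵥ w| ≤ (∑ i, ∑ j, |M i j|) * ‖u‖ := by
  have h1 : u ⬝ᵥ M *ᵥ w = w ⬝ᵥ Mᵀ *ᵥ u := by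
    rw [Matrix.dotProduct_mulVec, Matrix.mulVec_transpose, dotProduct_comm]
  have h2 : (∑ j, ∑ i, |Mᵀ j i|) = (∑ i, ∑ j, |M i j|) := by
    rw [Finset.sum_comm]
    simp [Matrix.transpose_apply]
  rw [h1, ← h2]
  exact BRdot_bound Mᵀ w hw u

lemma BRexp_diff {T x z : ℝ} (hx : x ≤ T) (hz : z ≤ T) :
    |Real.exp z - Real.exp x| ≤ Real.exp T * |z - x| := by
  have key : ∀ u v : ℝ, u ≤ v → v ≤ T → Real.exp v - Real.exp u ≤ Real.exp T * (v - u) := by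
    intro u v huv hvT
    have h1 : (u - v) + 1 ≤ Real.exp (u - v) := Real.add_one_le_exp _
    have h2 : Real.exp v - Real.exp u = Real.exp v * (1 - Real.exp (u - v)) := by
      rw [mul_sub, mul_one, ← Real.exp_add]
      have : v + (u - v) = u := by ring
      rw [this]
    rw [h2]
    have h3 : 1 - Real.exp (u - v) ≤ v - u := by linarith
    have h4 : Real.exp v ≤ Real.exp T := Real.exp_le_exp.2 hvT
    calc Real.exp v * (1 - Real.exp (u - v)) ≤ Real.exp v * (v - u) :=
          mul_le_mul_of_nonneg_left h3 (Real.exp_pos v).le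
      _ ≤ Real.exp T * (v - u) := mul_le_mul_of_nonneg_right h4 (by linarith)
  rcases le_total x z with h | h
  · rw [abs_of_nonneg (sub_nonneg.2 (Real.exp_le_exp.2 h)), abs_of_nonneg (sub_nonneg.2 h)]
    exact key x z h hz
  · rw [abs_sub_comm, abs_of_nonneg (sub_nonneg.2 (Real.exp_le_exp.2 h)), abs_sub_comm z x,
      abs_of_nonneg (sub_nonneg.2 h)]
    exact key z x h hx

lemma BRae_extract {α : Type*} [MeasurableSpace α] {μ : Measure α} {s : Set α}
    (hs : MeasurableSet s) {P : α → Prop} (h : ∀ᵐ x ∂μ.restrict s, P x) :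
    ∃ S, μ S = 0 ∧ ∀ x ∈ s, x ∉ S → P x := by
  refine ⟨{x | ¬ P x} ∩ s, ?_, ?_⟩
  · rw [← Measure.restrict_apply' hs]
    exact ae_iff.1 h
  · intro x hx hxS
    by_contra hP
    exact hxS ⟨hP, hx⟩

open MeasureTheory Filter in
/-- Along solutions of the best-response dynamics `dp/dt ∈ BR_p(q) − p`,
`dq/dt ∈ BR_q(p) − q` of a zero-sum game with a completely mixed Nash equilibrium,
`H(p(t),q(t)) = H(p(0),q(0)) e^{−t} → 0`. -/
theorem best_response_converges_to_nash {m n : ℕ}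
    (M : Matrix (Fin m) (Fin n) ℝ)
    (pbar : Fin m → ℝ) (qbar : Fin n → ℝ)
    (hpbar : pbar ∈ stdSimplex ℝ (Fin m)) (hqbar : qbar ∈ stdSimplex ℝ (Fin n))
    (hppos : ∀ i, 0 < pbar i) (hqpos : ∀ j, 0 < qbar j)
    (hmax : ∀ p' ∈ stdSimplex ℝ (Fin m), p' ⬝ᵥ M *ᵥ qbar ≤ pbar ⬝ᵥ M *ᵥ qbar)
    (hmin : ∀ q' ∈ stdSimplex ℝ (Fin n), pbar ⬝ᵥ M *ᵥ qbar ≤ pbar ⬝ᵥ M *ᵥ q')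
    (p : ℝ → Fin m → ℝ) (q : ℝ → Fin n → ℝ)
    (K : NNReal) (hLp : LipschitzWith K p) (hLq : LipschitzWith K q)
    (hsol : ∀ᵐ t ∂(volume.restrict (Set.Ici (0 : ℝ))),
      ∃ b ∈ {b ∈ stdSimplex ℝ (Fin m) |
          ∀ p' ∈ stdSimplex ℝ (Fin m), p' ⬝ᵥ M *ᵥ (q t) ≤ b ⬝ᵥ M *ᵥ (q t)},
      ∃ c ∈ {c ∈ stdSimplex ℝ (Fin n) |
          ∀ q' ∈ stdSimplex ℝ (Fin n), (p t) ⬝ᵥ M *ᵥ c ≤ (p t) ⬝ᵥ M *ᵥ q'},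
        HasDerivAt p (b - p t) t ∧ HasDerivAt q (c - q t) t) :
    (∀ t : ℝ, 0 ≤ t → H M (p t) (q t) = H M (p 0) (q 0) * Real.exp (-t)) ∧
    Tendsto (fun t => H M (p t) (q t)) atTop (nhds 0) := by
  classical
  set C : ℝ := ∑ i, ∑ j, |M i j| with hCdef
  have hC0 : 0 ≤ C := Finset.sum_nonneg fun i _ => Finset.sum_nonneg fun j _ => abs_nonneg _
  set F : (Fin n → ℝ) → ℝ :=
    fun u => sSup ((fun p' => p' ⬝ᵥ M *ᵥ u) '' stdSimplex ℝ (Fin m)) with hFdef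
  set G : (Fin m → ℝ) → ℝ :=
    fun u => sInf ((fun q' => u ⬝ᵥ M *ᵥ q') '' stdSimplex ℝ (Fin n)) with hGdef
  have hmne : ∀ u : Fin n → ℝ, ((fun p' => p' ⬝ᵥ M *ᵥ u) '' stdSimplex ℝ (Fin m)).Nonempty :=
    fun u => ⟨_, Set.mem_image_of_mem _ hpbar⟩
  have hnne : ∀ u : Fin m → ℝ, ((fun q' => u ⬝ᵥ M *ᵥ q') '' stdSimplex ℝ (Fin n)).Nonempty :=
    fun u => ⟨_, Set.mem_image_of_mem _ hqbar⟩
  have hbddF : ∀ u, BddAbove ((fun p' => p' ⬝ᵥ M *ᵥ u) '' stdSimplex ℝ (Fin m)) := by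
    intro u
    refine ⟨C * ‖u‖, ?_⟩
    rintro y ⟨p', hp', rfl⟩
    exact (le_abs_self _).trans (BRdot_bound M p' hp' u)
  have hbddG : ∀ u, BddBelow ((fun q' => u ⬝ᵥ M *ᵥ q') '' stdSimplex ℝ (Fin n)) := by
    intro u
    refine ⟨-(C * ‖u‖), ?_⟩
    rintro y ⟨q', hq', rfl⟩
    exact neg_le_of_abs_le (BRdot_bound' M q' hq' u)
  have hFle : ∀ (u) (p'), p' ∈ stdSimplex ℝ (Fin m) → p' ⬝ᵥ M *ᵥ u ≤ F u :=
    fun u p' hp' => le_csSup (hbddF u) (Set.mem_image_of_mem _ hp')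
  have hGle : ∀ (u) (q'), q' ∈ stdSimplex ℝ (Fin n) → G u ≤ u ⬝ᵥ M *ᵥ q' :=
    fun u q' hq' => csInf_le (hbddG u) (Set.mem_image_of_mem _ hq')
  have hFlip : ∀ u w, F u - F w ≤ C * ‖u - w‖ := by
    intro u w
    rw [sub_le_iff_le_add]
    refine csSup_le (hmne u) ?_
    rintro y ⟨p', hp', rfl⟩
    have h1 : p' ⬝ᵥ M *ᵥ u = p' ⬝ᵥ M *ᵥ w + p' ⬝ᵥ M *ᵥ (u - w) := by
      rw [Matrix.mulVec_sub, dotProduct_sub]; ring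
    have h2 := BRdot_bound M p' hp' (u - w)
    have h3 := hFle w p' hp'
    have h4 := le_abs_self (p' ⬝ᵥ M *ᵥ (u - w))
    simp only
    linarith [h1]
  have hGlip : ∀ u w, G u - G w ≤ C * ‖u - w‖ := by
    intro u w
    rw [sub_le_iff_le_add, ← sub_le_iff_le_add']
    refine le_csInf (hnne w) ?_
    rintro y ⟨q', hq', rfl⟩
    have h1 : u ⬝ᵥ M *ᵥ q' = w ⬝ᵥ M *ᵥ q' + (u - w) ⬝ᵥ M *ᵥ q' := by
      rw [sub_dotProduct]; ring
    have h2 := BRdot_bound' M q' hq' (u - w)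
    have h3 := hGle u q' hq'
    have h4 := le_abs_self ((u - w) ⬝ᵥ M *ᵥ q')
    simp only
    linarith [h1]
  set Fv : ℝ → ℝ := fun t => F (q t) with hFv
  set Gv : ℝ → ℝ := fun t => G (p t) with hGv
  have hqlip : ∀ x z : ℝ, ‖q z - q x‖ ≤ (K:ℝ) * |z - x| := by
    intro x z
    have := hLq.dist_le_mul z x
    rwa [dist_eq_norm, Real.dist_eq] at this
  have hplip : ∀ x z : ℝ, ‖p z - p x‖ ≤ (K:ℝ) * |z - x| := by
    intro x z
    have := hLp.dist_le_mul z x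
    rwa [dist_eq_norm, Real.dist_eq] at this
  have hFvlip : ∀ x z : ℝ, |Fv z - Fv x| ≤ C * (K:ℝ) * |z - x| := by
    intro x z
    refine abs_sub_le_iff.2 ⟨?_, ?_⟩
    · calc Fv z - Fv x ≤ C * ‖q z - q x‖ := hFlip _ _
        _ ≤ C * ((K:ℝ) * |z - x|) := mul_le_mul_of_nonneg_left (hqlip x z) hC0
        _ = C * (K:ℝ) * |z - x| := by ring
    · calc Fv x - Fv z ≤ C * ‖q x - q z‖ := hFlip _ _
        _ = C * ‖q z - q x‖ := by rw [norm_sub_rev]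
        _ ≤ C * ((K:ℝ) * |z - x|) := mul_le_mul_of_nonneg_left (hqlip x z) hC0
        _ = C * (K:ℝ) * |z - x| := by ring
  have hGvlip : ∀ x z : ℝ, |Gv z - Gv x| ≤ C * (K:ℝ) * |z - x| := by
    intro x z
    refine abs_sub_le_iff.2 ⟨?_, ?_⟩
    · calc Gv z - Gv x ≤ C * ‖p z - p x‖ := hGlip _ _
        _ ≤ C * ((K:ℝ) * |z - x|) := mul_le_mul_of_nonneg_left (hplip x z) hC0
        _ = C * (K:ℝ) * |z - x| := by ring
    · calc Gv x - Gv z ≤ C * ‖p x - p z‖ := hGlip _ _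
        _ = C * ‖p z - p x‖ := by rw [norm_sub_rev]
        _ ≤ C * ((K:ℝ) * |z - x|) := mul_le_mul_of_nonneg_left (hplip x z) hC0
        _ = C * (K:ℝ) * |z - x| := by ring
  have hCK0 : (0:ℝ) ≤ C * (K:ℝ) := mul_nonneg hC0 K.2
  have hFvLW : LipschitzWith (Real.toNNReal (C * (K:ℝ))) Fv := by
    apply LipschitzWith.of_dist_le_mul
    intro x y
    rw [Real.dist_eq, Real.dist_eq, Real.coe_toNNReal _ hCK0]
    exact hFvlip y x
  have hGvLW : LipschitzWith (Real.toNNReal (C * (K:ℝ))) Gv := by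
    apply LipschitzWith.of_dist_le_mul
    intro x y
    rw [Real.dist_eq, Real.dist_eq, Real.coe_toNNReal _ hCK0]
    exact hGvlip y x
  have hradF : volume {x : ℝ | ¬ DifferentiableAt ℝ Fv x} = 0 :=
    ae_iff.1 (hFvLW.ae_differentiableAt (μ := volume))
  have hradG : volume {x : ℝ | ¬ DifferentiableAt ℝ Gv x} = 0 :=
    ae_iff.1 (hGvLW.ae_differentiableAt (μ := volume))
  obtain ⟨S, hS0, hSP⟩ := BRae_extract measurableSet_Ici hsol
  set E : Set ℝ := S ∪ ({x : ℝ | ¬ DifferentiableAt ℝ Fv x} ∪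
    {x : ℝ | ¬ DifferentiableAt ℝ Gv x}) with hEdef
  have hE0 : volume E = 0 := measure_union_null hS0 (measure_union_null hradF hradG)
  -- the key pointwise derivative computation
  have hφkey : ∀ x : ℝ, x ∈ Set.Ici (0:ℝ) → x ∉ E →
      HasDerivAt (fun t => Real.exp t * (Fv t - Gv t)) 0 x := by
    intro x hx hxE
    have hdF : DifferentiableAt ℝ Fv x := by
      by_contra hcon
      exact hxE (Or.inr (Or.inl hcon))
    have hdG : DifferentiableAt ℝ Gv x := by
      by_contra hcon
      exact hxE (Or.inr (Or.inr hcon))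
    obtain ⟨b, hb, c, hc, hdp, hdq⟩ := hSP x hx (fun hxS => hxE (Or.inl hxS))
    obtain ⟨hbΔ, hbmax⟩ := hb
    obtain ⟨hcΔ, hcmin⟩ := hc
    have hFx : Fv x = b ⬝ᵥ M *ᵥ q x := by
      refine IsGreatest.csSup_eq ⟨Set.mem_image_of_mem _ hbΔ, ?_⟩
      rintro y ⟨p', hp', rfl⟩
      exact hbmax p' hp'
    have hGx : Gv x = p x ⬝ᵥ M *ᵥ c := by
      refine IsLeast.csInf_eq ⟨Set.mem_image_of_mem _ hcΔ, ?_⟩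
      rintro y ⟨q', hq', rfl⟩
      exact hcmin q' hq'
    have hqj : ∀ j, HasDerivAt (fun s => q s j) ((c - q x) j) x := by
      intro j
      exact (ContinuousLinearMap.proj (R := ℝ) (φ := fun _ : Fin n => ℝ)
        j).hasFDerivAt.comp_hasDerivAt x hdq
    have hpi : ∀ i, HasDerivAt (fun s => p s i) ((b - p x) i) x := by
      intro i
      exact (ContinuousLinearMap.proj (R := ℝ) (φ := fun _ : Fin m => ℝ)
        i).hasFDerivAt.comp_hasDerivAt x hdp
    have hgF : HasDerivAt (fun s => b ⬝ᵥ M *ᵥ q s) (b ⬝ᵥ M *ᵥ (c - q x)) x := by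
      have h1 : (fun s => b ⬝ᵥ M *ᵥ q s) = fun s => ∑ j, (b ᵥ* M) j * q s j := by
        funext s
        rw [Matrix.dotProduct_mulVec]
        simp [dotProduct]
      have h2 : b ⬝ᵥ M *ᵥ (c - q x) = ∑ j, (b ᵥ* M) j * (c - q x) j := by
        rw [Matrix.dotProduct_mulVec]
        simp [dotProduct]
      rw [h1, h2]
      exact HasDerivAt.fun_sum (fun j _ => (hqj j).const_mul _)
    have hgG : HasDerivAt (fun s => p s ⬝ᵥ M *ᵥ c) ((b - p x) ⬝ᵥ M *ᵥ c) x := by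
      have h1 : (fun s => p s ⬝ᵥ M *ᵥ c) = fun s => ∑ i, p s i * (M *ᵥ c) i := by
        funext s
        simp [dotProduct]
      have h2 : (b - p x) ⬝ᵥ M *ᵥ c = ∑ i, (b - p x) i * (M *ᵥ c) i := by
        simp [dotProduct]
      rw [h1, h2]
      exact HasDerivAt.fun_sum (fun i _ => (hpi i).mul_const _)
    have hFder : HasDerivAt Fv (b ⬝ᵥ M *ᵥ c - Fv x) x := by
      have hzero : Fv x - b ⬝ᵥ M *ᵥ q x = 0 := by rw [hFx]; ring
      have hmin : IsLocalMin (fun s => Fv s - b ⬝ᵥ M *ᵥ q s) x := by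
        apply Filter.Eventually.of_forall
        intro s
        have h1 : b ⬝ᵥ M *ᵥ q s ≤ Fv s := hFle (q s) b hbΔ
        simp only
        linarith [hzero]
      have hdd : HasDerivAt (fun s => Fv s - b ⬝ᵥ M *ᵥ q s)
          (deriv Fv x - b ⬝ᵥ M *ᵥ (c - q x)) x := hdF.hasDerivAt.sub hgF
      have h0 := hmin.hasDerivAt_eq_zero hdd
      have hd1 : deriv Fv x = b ⬝ᵥ M *ᵥ (c - q x) := by linarith [h0]
      have h2 : b ⬝ᵥ M *ᵥ (c - q x) = b ⬝ᵥ M *ᵥ c - Fv x := by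
        rw [Matrix.mulVec_sub, dotProduct_sub, hFx]
      have h3 := hdF.hasDerivAt
      rw [hd1, h2] at h3
      exact h3
    have hGder : HasDerivAt Gv (b ⬝ᵥ M *ᵥ c - Gv x) x := by
      have hzero : p x ⬝ᵥ M *ᵥ c - Gv x = 0 := by rw [hGx]; ring
      have hmin : IsLocalMin (fun s => p s ⬝ᵥ M *ᵥ c - Gv s) x := by
        apply Filter.Eventually.of_forall
        intro s
        have h1 : Gv s ≤ p s ⬝ᵥ M *ᵥ c := hGle (p s) c hcΔ
        simp only
        linarith [hzero]
      have hdd : HasDerivAt (fun s => p s ⬝ᵥ M *ᵥ c - Gv s)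
          ((b - p x) ⬝ᵥ M *ᵥ c - deriv Gv x) x := hgG.sub hdG.hasDerivAt
      have h0 := hmin.hasDerivAt_eq_zero hdd
      have hd1 : deriv Gv x = (b - p x) ⬝ᵥ M *ᵥ c := by linarith [h0]
      have h2 : (b - p x) ⬝ᵥ M *ᵥ c = b ⬝ᵥ M *ᵥ c - Gv x := by
        rw [sub_dotProduct, hGx]
      have h3 := hdG.hasDerivAt
      rw [hd1, h2] at h3
      exact h3
    have hhder : HasDerivAt (fun t => Fv t - Gv t) (-(Fv x - Gv x)) x := by
      have h := hFder.fun_sub hGder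
      exact h.congr_deriv (by ring)
    have h := (Real.hasDerivAt_exp x).fun_mul hhder
    exact h.congr_deriv (by ring)
  -- Lipschitz bound for φ on [0,T]
  have hhlip : ∀ x z : ℝ, |(Fv z - Gv z) - (Fv x - Gv x)| ≤ (2*C*(K:ℝ)) * |z - x| := by
    intro x z
    have h1 := hFvlip x z
    have h2 := hGvlip x z
    have h3 : (Fv z - Gv z) - (Fv x - Gv x) = (Fv z - Fv x) - (Gv z - Gv x) := by ring
    rw [h3]
    have h4 : |(Fv z - Fv x) - (Gv z - Gv x)| ≤ |Fv z - Fv x| + |Gv z - Gv x| := abs_sub _ _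
    linarith
  have hcontφ : Continuous (fun t => Real.exp t * (Fv t - Gv t)) :=
    Real.continuous_exp.mul (hFvLW.continuous.sub hGvLW.continuous)
  have hφlip : ∀ T : ℝ, 0 ≤ T → ∀ x ∈ Set.Icc (0:ℝ) T, ∀ z ∈ Set.Icc (0:ℝ) T,
      |Real.exp z * (Fv z - Gv z) - Real.exp x * (Fv x - Gv x)| ≤
        (Real.exp T * ((2*C*(K:ℝ)) + (|Fv 0 - Gv 0| + (2*C*(K:ℝ))*T))) * |z - x| := by
    intro T hT x hx z hz
    have hKh0 : (0:ℝ) ≤ 2*C*(K:ℝ) := by positivity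
    have hhx : |Fv x - Gv x| ≤ |Fv 0 - Gv 0| + (2*C*(K:ℝ))*T := by
      have h1 := hhlip 0 x
      have h2 : |x - 0| ≤ T := by rw [sub_zero, abs_of_nonneg hx.1]; exact hx.2
      have h3 : |Fv x - Gv x| ≤ |(Fv x - Gv x) - (Fv 0 - Gv 0)| + |Fv 0 - Gv 0| := by
        have := abs_add_le ((Fv x - Gv x) - (Fv 0 - Gv 0)) (Fv 0 - Gv 0)
        simpa using this
      nlinarith
    have h3 := hhlip x z
    have h4 := BRexp_diff (T := T) hx.2 hz.2
    have h5 : Real.exp z ≤ Real.exp T := Real.exp_le_exp.2 hz.2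
    have heq : Real.exp z * (Fv z - Gv z) - Real.exp x * (Fv x - Gv x)
        = Real.exp z * ((Fv z - Gv z) - (Fv x - Gv x))
          + (Real.exp z - Real.exp x) * (Fv x - Gv x) := by ring
    rw [heq]
    have e1 : Real.exp z * |(Fv z - Gv z) - (Fv x - Gv x)| ≤
        Real.exp T * ((2*C*(K:ℝ)) * |z - x|) :=
      mul_le_mul h5 h3 (abs_nonneg _) (Real.exp_pos T).le
    have e2 : |Real.exp z - Real.exp x| * |Fv x - Gv x| ≤
        (Real.exp T * |z - x|) * (|Fv 0 - Gv 0| + (2*C*(K:ℝ))*T) :=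
      mul_le_mul h4 hhx (abs_nonneg _) (by positivity)
    calc |Real.exp z * ((Fv z - Gv z) - (Fv x - Gv x))
          + (Real.exp z - Real.exp x) * (Fv x - Gv x)|
        ≤ |Real.exp z * ((Fv z - Gv z) - (Fv x - Gv x))|
          + |(Real.exp z - Real.exp x) * (Fv x - Gv x)| := abs_add_le _ _
      _ = Real.exp z * |(Fv z - Gv z) - (Fv x - Gv x)|
          + |Real.exp z - Real.exp x| * |Fv x - Gv x| := by
            rw [abs_mul, abs_mul, abs_of_pos (Real.exp_pos z)]
      _ ≤ Real.exp T * ((2*C*(K:ℝ)) * |z - x|)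
          + (Real.exp T * |z - x|) * (|Fv 0 - Gv 0| + (2*C*(K:ℝ))*T) := add_le_add e1 e2
      _ = (Real.exp T * ((2*C*(K:ℝ)) + (|Fv 0 - Gv 0| + (2*C*(K:ℝ))*T))) * |z - x| := by ring
  -- part 1
  have hpart1 : ∀ t : ℝ, 0 ≤ t → H M (p t) (q t) = H M (p 0) (q 0) * Real.exp (-t) := by
    intro t ht
    have hHt : H M (p t) (q t) = Fv t - Gv t := rfl
    have hH0 : H M (p 0) (q 0) = Fv 0 - Gv 0 := rfl
    have hconst : Real.exp t * (Fv t - Gv t) = Real.exp 0 * (Fv 0 - Gv 0) := by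
      refine BRconst (f := fun s => Real.exp s * (Fv s - Gv s))
        (L := Real.exp t * ((2*C*(K:ℝ)) + (|Fv 0 - Gv 0| + (2*C*(K:ℝ))*t)))
        (by positivity) ht hcontφ.continuousOn ?_ hE0 ?_
      · intro x hx z hz
        exact hφlip t ht x hx z hz
      · intro x hx hxE
        exact hφkey x hx.1 hxE
    rw [Real.exp_zero, one_mul] at hconst
    rw [hHt, hH0, Real.exp_neg, eq_comm, mul_inv_eq_iff_eq_mul₀ (Real.exp_ne_zero t),
      eq_comm, mul_comm]
    exact hconst
  refine ⟨hpart1, ?_⟩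
  have h1 : Tendsto (fun t : ℝ => H M (p 0) (q 0) * Real.exp (-t)) atTop (nhds 0) := by
    have := Real.tendsto_exp_neg_atTop_nhds_zero.const_mul (H M (p 0) (q 0))
    simpa using this
  refine Tendsto.congr' ?_ h1
  filter_upwards [eventually_ge_atTop (0:ℝ)] with t ht
  exact (hpart1 t ht).symm
end

section
/- Let solutions of the best-response dynamics be piecewise linear in the following sense: on an interval [t₁,t₂] where BR_p(q(t)) ≡ b ∈ Σ_p and BR_q(p(t)) ≡ c ∈ Σ_q are constant, the solution of dp/dt = b − p, dq/dt = c − q is p(t) = e^{−(t−t₁)}p(t₁) + (1−e^{−(t−t₁)})b, q(t) = e^{−(t−t₁)}q(t₁) + (1−e^{−(t−t₁)})c. Then the radial projection of this solution onto the level set H^{-1}(H(p(t₁),q(t₁))) (along rays through the completely mixed equilibrium (p̄,q̄)) is the straight-line path p̃(t) = p(t₁) + (e^{t−t₁}−1)(b − p̄), q̃(t) = q(t₁) + (e^{t−t₁}−1)(c − q̄); i.e., H(p̃(t), q̃(t)) = H(p(t₁),q(t₁)) for all t ∈ [t₁,t₂]. -/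
open Matrix

/-- `H(p,q) = max_i (Mq)_i − min_j (pᵀM)_j`. -/
noncomputable def H2 {n : ℕ} (M : Matrix (Fin n) (Fin n) ℝ) (p q : Fin n → ℝ) : ℝ :=
  (⨆ i, (M *ᵥ q) i) - ⨅ j, (p ᵥ* M) j

/-- The radial projection (along rays through the completely mixed equilibrium) of the
piecewise-linear best-response solution segment is the straight-line path
`p̃(t) = p₁ + (e^{t−t₁}−1)(b−p̄)`, `q̃(t) = q₁ + (e^{t−t₁}−1)(c−q̄)`, along which `H` is
constant. -/
theorem projected_orbit_is_straight {n : ℕ} [NeZero n]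
    (M : Matrix (Fin n) (Fin n) ℝ)
    (pbar qbar : Fin n → ℝ)
    (hpbar : pbar ∈ stdSimplex ℝ (Fin n)) (hqbar : qbar ∈ stdSimplex ℝ (Fin n))
    (hppos : ∀ i, 0 < pbar i) (hqpos : ∀ j, 0 < qbar j)
    (l μ : ℝ) (hl : pbar ᵥ* M = fun _ => l) (hμ : M *ᵥ qbar = fun _ => μ)
    (t₁ t₂ : ℝ) (ht : t₁ ≤ t₂)
    (p₁ q₁ : Fin n → ℝ) (hp₁ : p₁ ∈ stdSimplex ℝ (Fin n)) (hq₁ : q₁ ∈ stdSimplex ℝ (Fin n))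
    (b c : Fin n → ℝ) (hb : b ∈ stdSimplex ℝ (Fin n)) (hc : c ∈ stdSimplex ℝ (Fin n))
    -- the straight-line projected path:
    (pt qt : ℝ → Fin n → ℝ)
    (hpt : ∀ t, pt t = p₁ + (Real.exp (t - t₁) - 1) • (b - pbar))
    (hqt : ∀ t, qt t = q₁ + (Real.exp (t - t₁) - 1) • (c - qbar))
    -- on [t₁,t₂] the best responses along the projected path are the constants b and c:
    (hbmax : ∀ t ∈ Set.Icc t₁ t₂, b ⬝ᵥ M *ᵥ (qt t) = ⨆ i, (M *ᵥ (qt t)) i)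
    (hcmin : ∀ t ∈ Set.Icc t₁ t₂, (pt t) ⬝ᵥ M *ᵥ c = ⨅ j, ((pt t) ᵥ* M) j) :
    -- the straight path is the radial projection of the exponential solution
    -- p(t) = e^{−(t−t₁)}p₁ + (1−e^{−(t−t₁)})b, q(t) = e^{−(t−t₁)}q₁ + (1−e^{−(t−t₁)})c:
    (∀ t ∈ Set.Icc t₁ t₂,
      pt t - pbar = Real.exp (t - t₁) •
        ((Real.exp (-(t - t₁)) • p₁ + (1 - Real.exp (-(t - t₁))) • b) - pbar) ∧
      qt t - qbar = Real.exp (t - t₁) •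
        ((Real.exp (-(t - t₁)) • q₁ + (1 - Real.exp (-(t - t₁))) • c) - qbar)) ∧
    -- and H is constant along it:
    (∀ t ∈ Set.Icc t₁ t₂, H2 M (pt t) (qt t) = H2 M p₁ q₁) := by

  have hexp : ∀ t : ℝ, Real.exp (t - t₁) ≠ 0 := fun t => Real.exp_ne_zero _
  have hlμ : l = μ := by
    have h1 : pbar ⬝ᵥ M *ᵥ qbar = μ := by
      rw [hμ]
      simp [dotProduct, ← Finset.sum_mul, hpbar.2]
    have h2 : pbar ⬝ᵥ M *ᵥ qbar = l := by
      rw [Matrix.dotProduct_mulVec, hl]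
      simp [dotProduct, ← Finset.mul_sum, hqbar.2]
    rw [← h2, h1]
  have hbconst : b ⬝ᵥ (fun _ => μ : Fin n → ℝ) = μ := by
    simp [dotProduct, ← Finset.sum_mul, hb.2]
  have hpbarc : pbar ⬝ᵥ M *ᵥ c = l := by
    rw [Matrix.dotProduct_mulVec, hl]
    simp [dotProduct, ← Finset.mul_sum, hc.2]
  constructor
  · intro t htmem
    constructor
    · funext i
      simp only [hpt, Pi.add_apply, Pi.sub_apply, Pi.smul_apply, smul_eq_mul,
        Real.exp_neg]
      field_simp
      ring
    · funext i
      simp only [hqt, Pi.add_apply, Pi.sub_apply, Pi.smul_apply, smul_eq_mul,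
        Real.exp_neg]
      field_simp
      ring
  · intro t htmem
    have ht₁mem : t₁ ∈ Set.Icc t₁ t₂ := ⟨le_refl _, ht⟩
    have hpt1 : pt t₁ = p₁ := by rw [hpt]; simp
    have hqt1 : qt t₁ = q₁ := by rw [hqt]; simp
    have hkey : ∀ u ∈ Set.Icc t₁ t₂,
        H2 M (pt u) (qt u) = b ⬝ᵥ M *ᵥ qt u - pt u ⬝ᵥ M *ᵥ c := by
      intro u hu
      rw [H2, ← hbmax u hu, ← hcmin u hu]
    have h1 : b ⬝ᵥ M *ᵥ qt t
        = b ⬝ᵥ M *ᵥ q₁ + (Real.exp (t - t₁) - 1) * (b ⬝ᵥ M *ᵥ c - μ) := by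
      rw [hqt]
      rw [Matrix.mulVec_add, Matrix.mulVec_smul, Matrix.mulVec_sub, hμ,
        dotProduct_add, dotProduct_smul, dotProduct_sub, hbconst, smul_eq_mul]
    have h2 : pt t ⬝ᵥ M *ᵥ c
        = p₁ ⬝ᵥ M *ᵥ c + (Real.exp (t - t₁) - 1) * (b ⬝ᵥ M *ᵥ c - l) := by
      rw [hpt]
      rw [add_dotProduct, smul_dotProduct, sub_dotProduct, hpbarc, smul_eq_mul]
    have hH1 : H2 M p₁ q₁ = b ⬝ᵥ M *ᵥ q₁ - p₁ ⬝ᵥ M *ᵥ c := by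
      have := hkey t₁ ht₁mem
      rwa [hpt1, hqt1] at this
    rw [hkey t htmem, h1, h2, hH1, hlμ]
    ring
end
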